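/- The quotient graph G' obtained from G by identifying ordered pencils with the same first coordinate (with multiplicity of edges counted between classes) is the complete graph K_7 with every edge doubled: between any two distinct points p ≠ p' of the Fano plane there are exactly 12 edges of G joining pencils based at p to pencils based at p', i.e., each of the 6 pencils at p has exactly 2 neighbors at p'. -/

import Mathlib

/-- Points of the Fano plane: we use `1,…,7` inside `Fin 8`. -/
abbrev FPt := Fin 8

/-- The seven lines of the Fano plane. -/
def fanoLines : Finset (Finset FPt) :=
  {{1,2,3},{1,4,5},{1,6,7},{2,4,6},{2,5,7},{3,4,7},{3,5,6}}

/-- The seven points of the Fano plane. -/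
def fanoPoints : Finset FPt := {1,2,3,4,5,6,7}

/-- `(p, pairs)` is an ordered pencil if for each `i`, `insert p (pairs i)`
is a Fano line, and the three (2-element) pairs are distinct. -/
def IsPencil (v : FPt × (Fin 3 → Finset FPt)) : Prop :=
  v.1 ∈ fanoPoints ∧
  (∀ i, (v.2 i).card = 2 ∧ v.1 ∉ v.2 i ∧ insert v.1 (v.2 i) ∈ fanoLines) ∧
  Function.Injective v.2

instance : DecidablePred IsPencil := fun v => by
  unfold IsPencil Function.Injective; infer_instance

/-- Ordered pencils of the Fano plane: the vertices of the graph `G`. -/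
def Pencil := {v : FPt × (Fin 3 → Finset FPt) // IsPencil v}

instance : DecidableEq Pencil := by unfold Pencil; infer_instance
instance : Fintype Pencil := by unfold Pencil; infer_instance

/-- Adjacency: different base points, and the pairs in each position meet
in exactly one point. -/
def pAdj (v w : Pencil) : Prop :=
  v.1.1 ≠ w.1.1 ∧ ∀ i, (v.1.2 i ∩ w.1.2 i).card = 1

instance : DecidableRel pAdj := fun v w => by unfold pAdj; infer_instance

/-- The graph `G` on the 42 ordered pencils of the Fano plane. -/
def G : SimpleGraph Pencil where
  Adj := pAdj
  symm := ⟨fun v w h => ⟨h.1.symm, fun i => by rw [Finset.inter_comm]; exact h.2 i⟩⟩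
  loopless := ⟨fun v h => h.1 rfl⟩

instance : DecidableRel G.Adj := fun v w => by
  change Decidable (pAdj v w); infer_instance

/-!
A pencil at `p` is an ordering of the three lines through `p`, so the pencils at `p` are the
six permutations of a fixed list of these lines. For `p ≠ p'`, a line through `p` and a line
through `p'` both different from `pp'` meet in exactly one point, which lies off `pp'`, while
`pp'` meets them only in `p` resp. `p'`. Hence the `i`-th pairs of a pencil at `p` and a pencil
at `p'` meet in exactly one point iff both or neither come from `pp'`: a pencil at `p'` is
adjacent to a given pencil at `p` iff it puts `pp'` in the same position, which leaves 2 of its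
6 orderings, and `6 * 2 = 12` edges join the two classes.
-/

open Finset

/-- `linePairs p a` is the `a`-th line through `p` with `p` removed; row `0` is padding, as the
points are `1, …, 7`. -/
def linePairs : FPt → Fin 3 → Finset FPt :=
  ![![∅, ∅, ∅], ![{2,3}, {4,5}, {6,7}], ![{1,3}, {4,6}, {5,7}], ![{1,2}, {4,7}, {5,6}],
    ![{1,5}, {2,6}, {3,7}], ![{1,4}, {2,7}, {3,6}], ![{1,7}, {2,4}, {3,5}],
    ![{1,6}, {2,5}, {3,4}]]

set_option maxRecDepth 4000 in
lemma exists_linePairs_eq_erase : ∀ p ∈ fanoPoints, ∀ L ∈ fanoLines, p ∈ L →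
    ∃ a, linePairs p a = L.erase p := by decide

lemma linePairs_spec : ∀ p ∈ fanoPoints, ∀ a, (linePairs p a).card = 2 ∧ p ∉ linePairs p a ∧
    insert p (linePairs p a) ∈ fanoLines := by decide

lemma linePairs_injective : ∀ p ∈ fanoPoints, Function.Injective (linePairs p) := by decide

lemma exists_mem_linePairs : ∀ p ∈ fanoPoints, ∀ q ∈ fanoPoints, p ≠ q →
    ∃ a, q ∈ linePairs p a := by decide

lemma mem_linePairs_iff_eq : ∀ p ∈ fanoPoints, ∀ q a c, q ∈ linePairs p a →
    (q ∈ linePairs p c ↔ c = a) := by decide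

lemma card_linePairs_inter_eq_one_iff : ∀ p ∈ fanoPoints, ∀ q ∈ fanoPoints, p ≠ q → ∀ a b,
    (linePairs p a ∩ linePairs q b).card = 1 ↔ (q ∈ linePairs p a ↔ p ∈ linePairs q b) := by
  decide

lemma isPencil_iff {p : FPt} {f : Fin 3 → Finset FPt} :
    IsPencil (p, f) ↔ p ∈ fanoPoints ∧ ∃ τ : Equiv.Perm (Fin 3), f = linePairs p ∘ τ := by
  constructor
  · rintro ⟨hp, hlines, hinj⟩
    choose g hg using fun i =>
      exists_linePairs_eq_erase p hp _ (hlines i).2.2 (mem_insert_self p _)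
    have hf : f = linePairs p ∘ g :=
      funext fun i => by rw [Function.comp_apply, hg, erase_insert (hlines i).2.1]
    have hg_inj : Function.Injective g := fun i j h =>
      hinj (by rw [hf]; exact congrArg (linePairs p) h)
    exact ⟨hp, Equiv.ofBijective g (Finite.injective_iff_bijective.mp hg_inj), hf⟩
  · rintro ⟨hp, τ, rfl⟩
    exact ⟨hp, fun i => linePairs_spec p hp (τ i), (linePairs_injective p hp).comp τ.injective⟩

def pencilOf (p : FPt) (hp : p ∈ fanoPoints) : Equiv.Perm (Fin 3) ↪ Pencil where
  toFun τ := ⟨(p, linePairs p ∘ τ), isPencil_iff.mpr ⟨hp, τ, rfl⟩⟩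
  inj' _ _ h := Equiv.ext fun i =>
    linePairs_injective p hp (congrArg (fun v : Pencil => v.1.2 i) h)

lemma exists_pencilOf_eq {p : FPt} (hp : p ∈ fanoPoints) (v : Pencil) (hv : v.1.1 = p) :
    ∃ τ, pencilOf p hp τ = v := by
  subst hv
  obtain ⟨-, τ, hτ⟩ := isPencil_iff.mp v.2
  exact ⟨τ, Subtype.ext (Prod.ext rfl hτ.symm)⟩

lemma filter_base_eq_map_pencilOf {p : FPt} (hp : p ∈ fanoPoints) :
    univ.filter (fun v : Pencil => v.1.1 = p) = univ.map (pencilOf p hp) := by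
  ext v
  simp only [mem_filter, mem_univ, true_and, mem_map]
  constructor
  · rintro rfl
    exact exists_pencilOf_eq hp v rfl
  · rintro ⟨τ, rfl⟩
    rfl

lemma card_filter_base {p : FPt} (hp : p ∈ fanoPoints) :
    (univ.filter (fun v : Pencil => v.1.1 = p)).card = 6 := by
  rw [filter_base_eq_map_pencilOf hp, card_map, card_univ, Fintype.card_perm, Fintype.card_fin]
  rfl

lemma Equiv.Perm.forall_apply_eq_iff_apply_symm {α : Type*} {σ τ : Equiv.Perm α} {a b : α} :
    (∀ i, σ i = a ↔ τ i = b) ↔ τ (σ.symm a) = b := by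
  refine ⟨fun h => (h _).mp (σ.apply_symm_apply a), fun h i => ?_⟩
  rw [← h, τ.injective.eq_iff, Equiv.eq_symm_apply]

lemma adj_pencilOf_iff {p q : FPt} (hp : p ∈ fanoPoints) (hq : q ∈ fanoPoints) (hpq : p ≠ q)
    {a b : Fin 3} (ha : q ∈ linePairs p a) (hb : p ∈ linePairs q b) (σ τ : Equiv.Perm (Fin 3)) :
    G.Adj (pencilOf p hp σ) (pencilOf q hq τ) ↔ τ (σ.symm a) = b := by
  rw [← Equiv.Perm.forall_apply_eq_iff_apply_symm]
  change (p ≠ q ∧ ∀ i, (linePairs p (σ i) ∩ linePairs q (τ i)).card = 1) ↔ _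
  simp only [hpq, ne_eq, not_false_eq_true, true_and, card_linePairs_inter_eq_one_iff p hp q hq hpq,
    mem_linePairs_iff_eq p hp q a _ ha, mem_linePairs_iff_eq q hq p b _ hb]

lemma card_filter_perm_apply_eq (c b : Fin 3) :
    (univ.filter fun τ : Equiv.Perm (Fin 3) => τ c = b).card = 2 := by
  revert c b; decide

lemma card_neighbors_with_base {p q : FPt} (hp : p ∈ fanoPoints) (hq : q ∈ fanoPoints)
    (hpq : p ≠ q) (v : Pencil) (hv : v.1.1 = p) :
    (univ.filter fun w : Pencil => G.Adj v w ∧ w.1.1 = q).card = 2 := by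
  obtain ⟨σ, rfl⟩ := exists_pencilOf_eq hp v hv
  obtain ⟨a, ha⟩ := exists_mem_linePairs p hp q hq hpq
  obtain ⟨b, hb⟩ := exists_mem_linePairs q hq p hp hpq.symm
  rw [← filter_filter, filter_comm, filter_base_eq_map_pencilOf hq, filter_map, card_map]
  simp only [Function.comp_def, adj_pencilOf_iff hp hq hpq ha hb]
  exact card_filter_perm_apply_eq _ _

lemma Finset.card_filter_univ_prod {α β : Type*} [Fintype α] [Fintype β] (r : α → β → Prop)
    [DecidablePred fun e : α × β => r e.1 e.2] [∀ a, DecidablePred (r a)] :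
    (univ.filter fun e : α × β => r e.1 e.2).card = ∑ a, (univ.filter (r a)).card := by
  simp only [card_filter, Fintype.sum_prod_type]

lemma card_edges_between_bases {p q : FPt} (hp : p ∈ fanoPoints) (hq : q ∈ fanoPoints)
    (hpq : p ≠ q) :
    #{e : Pencil × Pencil | G.Adj e.1 e.2 ∧ e.1.1.1 = p ∧ e.2.1.1 = q} = 12 := by
  have fiber (v : Pencil) : (univ.filter fun w => G.Adj v w ∧ v.1.1 = p ∧ w.1.1 = q).card =
      if v.1.1 = p then (univ.filter fun w => G.Adj v w ∧ w.1.1 = q).card else 0 := by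
    split_ifs with hv <;> simp only [hv, true_and, false_and, and_false, filter_false, card_empty]
  have neighbors : ∀ v ∈ univ.filter (fun v : Pencil => v.1.1 = p),
      (univ.filter fun w => G.Adj v w ∧ w.1.1 = q).card = 2 := by
    simpa only [mem_filter, mem_univ, true_and] using card_neighbors_with_base hp hq hpq
  rw [card_filter_univ_prod fun v w => G.Adj v w ∧ v.1.1 = p ∧ w.1.1 = q,
    Fintype.sum_congr _ _ fiber, ← sum_filter, sum_const_nat neighbors, card_filter_base hp]

theorem quotient_is_doubled_K7 :
    ∀ p ∈ fanoPoints, ∀ p' ∈ fanoPoints, p ≠ p' →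
      (Finset.univ.filter (fun e : Pencil × Pencil =>
          G.Adj e.1 e.2 ∧ e.1.1.1 = p ∧ e.2.1.1 = p')).card = 12 ∧
      (∀ v : Pencil, v.1.1 = p →
        (Finset.univ.filter (fun w : Pencil => G.Adj v w ∧ w.1.1 = p')).card = 2) :=
  fun _ hp _ hp' hne =>
    ⟨card_edges_between_bases hp hp' hne, card_neighbors_with_base hp hp' hne⟩
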